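/- arXiv:2001.00278 — 4 statements merged into one kernel-verified Lean document; each statement's English description precedes it below -/
import Mathlib

section
/- Let F be a vertex-preserving endofunctor on directed graphs such that F(G) is transitive for every G, F(D2)=D2, and F(L2)=L2. Then F equals the transitive closure functor: for all G and vertices v,v', there is an arrow v→v' in F(G) if and only if there is a directed path from v to v' in G. -/
/-- A graph map between directed graphs (vertices `V`, arrow relation `E`):
it sends every arrow to an arrow or collapses it to a single vertex
(self-loops are implicitly present / handled by reflexivity). -/
def IsGraphMap {V W : Type} (E : V → V → Prop) (E' : W → W → Prop) (φ : V → W) : Prop :=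
  ∀ x y, E x y → E' (φ x) (φ y) ∨ φ x = φ y

/-- A vertex-preserving endofunctor on the category of finite directed graphs
(graphs are reflexive relations, since all self-loops are present; the functor
keeps the vertex set fixed and sends each graph map to itself). -/
structure GraphFunctor where
  obj : ∀ (V : Type) [Finite V], (V → V → Prop) → (V → V → Prop)
  refl : ∀ (V : Type) [Finite V] (E : V → V → Prop), Reflexive E → Reflexive (obj V E)
  map : ∀ (V W : Type) [Finite V] [Finite W] (E : V → V → Prop) (E' : W → W → Prop)
      (φ : V → W), Reflexive E → Reflexive E' →
      IsGraphMap E E' φ → IsGraphMap (obj V E) (obj W E') φ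

/-- The two-vertex line graph `L2` : a single arrow `0 → 1` (plus self-loops). -/
def L2rel : Fin 2 → Fin 2 → Prop := fun a b => a = b ∨ (a = 0 ∧ b = 1)

/-- The complete graph `K2` on two vertices. -/
def K2rel : Fin 2 → Fin 2 → Prop := fun _ _ => True

/-- The discrete graph `D2` on two vertices (only self-loops). -/
def D2rel : Fin 2 → Fin 2 → Prop := fun a b => a = b

/-!
A graph map into `L2` is the same thing as an upward-closed set of vertices (the preimage of `1`),
and a graph map out of `L2` is the same thing as an arrow. Pushing an arrow `u → u'` of `F(G)`
forward along the indicator of the set reachable from `u` gives an arrow `1 → 0` of `F(L2) = L2`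
unless `u'` is reachable; pulling the arrow of `L2 = F(L2)` back along an arrow `a → b` of `G`
shows `G ⊆ F(G)`, and transitivity of `F(G)` then contains all paths.
-/

theorem reflexive_L2rel : Reflexive L2rel := fun _ => Or.inl rfl

theorem isGraphMap_L2rel_indicator {V : Type} {E : V → V → Prop} {S : Set V}
    (hS : ∀ x y, E x y → x ∈ S → y ∈ S) [DecidablePred (· ∈ S)] :
    IsGraphMap E L2rel (fun x => if x ∈ S then 1 else 0) := by
  intro x y hxy
  by_cases hx : x ∈ S
  · exact Or.inr (by simp [hx, hS x y hxy hx])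
  · by_cases hy : y ∈ S
    · exact Or.inl (Or.inr (by simp [hx, hy]))
    · exact Or.inr (by simp [hx, hy])

theorem isGraphMap_L2rel_of_rel {V : Type} {E : V → V → Prop} {a b : V} (hab : E a b) :
    IsGraphMap L2rel E ![a, b] := by
  rintro x y (rfl | ⟨rfl, rfl⟩)
  · exact Or.inr rfl
  · exact Or.inl hab

namespace GraphFunctor

variable (F : GraphFunctor) {V : Type} [Finite V] {E : V → V → Prop}

theorem reflTransGen_of_obj (hL : ¬ F.obj (Fin 2) L2rel 1 0) (hE : Reflexive E) {u u' : V}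
    (h : F.obj V E u u') : Relation.ReflTransGen E u u' := by
  classical
  by_contra hnr
  let S := {x | Relation.ReflTransGen E u x}
  have hS : ∀ x y, E x y → x ∈ S → y ∈ S := fun _ _ hxy hx => Relation.ReflTransGen.tail hx hxy
  have hu : u ∈ S := Relation.ReflTransGen.refl
  have hu' : u' ∉ S := hnr
  rcases F.map V (Fin 2) E L2rel _ hE reflexive_L2rel (isGraphMap_L2rel_indicator hS) u u' h with
    h10 | h10
  · simp only [hu, hu', if_true, if_false] at h10
    exact hL h10
  · simp [hu, hu'] at h10

theorem obj_of_rel (hL : F.obj (Fin 2) L2rel 0 1) (hE : Reflexive E) {a b : V} (hab : E a b) :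
    F.obj V E a b := by
  rcases F.map (Fin 2) V L2rel E ![a, b] reflexive_L2rel hE (isGraphMap_L2rel_of_rel hab) 0 1 hL
    with h | h
  · simpa using h
  · obtain rfl : a = b := h
    exact F.refl V E hE a

theorem obj_of_reflTransGen (hL : F.obj (Fin 2) L2rel 0 1) (hE : Reflexive E)
    (htrans : Transitive (F.obj V E)) {u u' : V} (h : Relation.ReflTransGen E u u') :
    F.obj V E u u' := by
  induction h with
  | refl => exact F.refl V E hE u
  | tail _ hbc ih => exact htrans ih (F.obj_of_rel hL hE hbc)

end GraphFunctor

theorem tc_characterization_general (F : GraphFunctor)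
    (htrans : ∀ (V : Type) [Finite V] (E : V → V → Prop), Reflexive E →
        Transitive (F.obj V E))
    (hL : F.obj (Fin 2) L2rel = L2rel) :
    ∀ (V : Type) [Finite V] (E : V → V → Prop), Reflexive E →
      ∀ v v', F.obj V E v v' ↔ Relation.ReflTransGen E v v' := by
  intro V _ E hE v v'
  have h01 : F.obj (Fin 2) L2rel 0 1 := by rw [hL]; exact Or.inr ⟨rfl, rfl⟩
  have h10 : ¬ F.obj (Fin 2) L2rel 1 0 := by simp [hL, L2rel]
  exact ⟨F.reflTransGen_of_obj h10 hE, F.obj_of_reflTransGen h01 hE (htrans V E hE)⟩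

/-- a functor with transitive images, F(D2)=D2 and F(L2)=L2
is the transitive closure functor. -/
theorem tc_characterization (F : GraphFunctor)
    (htrans : ∀ (V : Type) [Finite V] (E : V → V → Prop), Reflexive E →
        Transitive (F.obj V E))
    (hD : F.obj (Fin 2) D2rel = D2rel) (hL : F.obj (Fin 2) L2rel = L2rel) :
    ∀ (V : Type) [Finite V] (E : V → V → Prop), Reflexive E →
      ∀ v v', F.obj V E v v' ↔ Relation.ReflTransGen E v v' :=
  tc_characterization_general F htrans hL
end

section
/- Every vertex-preserving endofunctor F on directed graphs other than the full completion functor is additive: F(G1 ⊔ G2) = F(G1) ⊔ F(G2) for all graphs G1, G2, where ⊔ denotes disjoint union. -/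
/-- The disjoint union of two arrow relations. -/
def sumRel {V1 V2 : Type} (E1 : V1 → V1 → Prop) (E2 : V2 → V2 → Prop) :
    V1 ⊕ V2 → V1 ⊕ V2 → Prop := fun a b =>
  match a, b with
  | Sum.inl x, Sum.inl y => E1 x y
  | Sum.inr x, Sum.inr y => E2 x y
  | _, _ => False

/-
Since `F` acts identically on graph maps, an arrow `x → y` of `F G` is sent by any
graph map `φ : G → H` to an arrow `φ x → φ y` of `F H` (a loop when `φ` collapses it). The
discrete graph `D2` maps onto any two vertices of any graph, so if `F D2` had an arrow between
its two vertices, `F` would be the full completion functor. Hence `F D2` is discrete, and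
projecting `G1 ⊔ G2` onto `D2` shows that `F (G1 ⊔ G2)` has no arrow between the summands.
Within a summand, `Gi` is a retract of `G1 ⊔ G2` (collapse the other summand to a point), and
`F` preserves retracts.
-/

theorem isGraphMap_of_discrete {V W : Type} (E' : W → W → Prop) (φ : V → W) :
    IsGraphMap (fun a b : V => a = b) E' φ :=
  fun _ _ hab => Or.inr (congrArg φ hab)

section sumRel

variable {V1 V2 : Type} (E1 : V1 → V1 → Prop) (E2 : V2 → V2 → Prop)

theorem reflexive_sumRel (h1 : Reflexive E1) (h2 : Reflexive E2) : Reflexive (sumRel E1 E2)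
  | Sum.inl x => h1 x
  | Sum.inr x => h2 x

theorem isGraphMap_inl : IsGraphMap E1 (sumRel E1 E2) Sum.inl :=
  fun _ _ h => Or.inl h

theorem isGraphMap_inr : IsGraphMap E2 (sumRel E1 E2) Sum.inr :=
  fun _ _ h => Or.inl h

theorem isGraphMap_elim_id_const (x : V1) :
    IsGraphMap (sumRel E1 E2) E1 (Sum.elim id fun _ => x)
  | Sum.inl _, Sum.inl _, h => Or.inl h
  | Sum.inr _, Sum.inr _, _ => Or.inr rfl

theorem isGraphMap_elim_const_id (x : V2) :
    IsGraphMap (sumRel E1 E2) E2 (Sum.elim (fun _ => x) id)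
  | Sum.inl _, Sum.inl _, _ => Or.inr rfl
  | Sum.inr _, Sum.inr _, h => Or.inl h

theorem isGraphMap_elim_toD2 :
    IsGraphMap (sumRel E1 E2) D2rel (Sum.elim (fun _ => 0) fun _ => 1)
  | Sum.inl _, Sum.inl _, _ => Or.inr rfl
  | Sum.inr _, Sum.inr _, _ => Or.inr rfl

end sumRel

namespace GraphFunctor

variable (F : GraphFunctor) {V W : Type} [Finite V] [Finite W]
  {E : V → V → Prop} {E' : W → W → Prop}

theorem obj_apply_of_isGraphMap (hE : Reflexive E) (hE' : Reflexive E') {φ : V → W}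
    (hφ : IsGraphMap E E' φ) {x y : V} (hxy : F.obj V E x y) : F.obj W E' (φ x) (φ y) := by
  rcases F.map V W E E' φ hE hE' hφ x y hxy with hedge | hcollapse
  · exact hedge
  · rw [hcollapse]
    exact F.refl W E' hE' _

theorem obj_apply_iff_of_retraction (hE : Reflexive E) (hE' : Reflexive E')
    {ι : V → W} {r : W → V} (hι : IsGraphMap E E' ι) (hr : IsGraphMap E' E r)
    (hri : ∀ x, r (ι x) = x) (x y : V) : F.obj W E' (ι x) (ι y) ↔ F.obj V E x y := by
  refine ⟨fun hxy => ?_, F.obj_apply_of_isGraphMap hE hE' hι⟩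
  simpa only [hri] using F.obj_apply_of_isGraphMap hE' hE hr hxy

theorem obj_apply_of_obj_D2 {a b : Fin 2} (hab : a ≠ b) (hD2 : F.obj (Fin 2) D2rel a b)
    (hE : Reflexive E) (x y : V) : F.obj V E x y := by
  let φ : Fin 2 → V := fun c => if c = a then x else y
  have hφa : φ a = x := if_pos rfl
  have hφb : φ b = y := if_neg hab.symm
  rw [← hφa, ← hφb]
  exact F.obj_apply_of_isGraphMap (fun _ => rfl) hE (isGraphMap_of_discrete E φ) hD2

theorem eq_of_obj_D2 (h : ¬ ∀ (V : Type) [Finite V] (E : V → V → Prop), Reflexive E →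
      ∀ x y, F.obj V E x y) {a b : Fin 2} (hD2 : F.obj (Fin 2) D2rel a b) : a = b := by
  by_contra hab
  exact h fun V _ E hE x y => F.obj_apply_of_obj_D2 hab hD2 hE x y

end GraphFunctor

/-- every endofunctor other than full completion is additive. -/
theorem additive_of_not_completion (F : GraphFunctor)
    (h : ¬ ∀ (V : Type) [Finite V] (E : V → V → Prop), Reflexive E →
        ∀ x y, F.obj V E x y)
    (V1 V2 : Type) [Finite V1] [Finite V2]
    (E1 : V1 → V1 → Prop) (E2 : V2 → V2 → Prop)
    (h1 : Reflexive E1) (h2 : Reflexive E2) :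
    F.obj (V1 ⊕ V2) (sumRel E1 E2) = sumRel (F.obj V1 E1) (F.obj V2 E2) := by
  have hsum := reflexive_sumRel E1 E2 h1 h2
  have toD2 {a b : V1 ⊕ V2} (hab : F.obj _ (sumRel E1 E2) a b) :
      Sum.elim (fun _ => (0 : Fin 2)) (fun _ => 1) a = Sum.elim (fun _ => 0) (fun _ => 1) b :=
    F.eq_of_obj_D2 h <|
      F.obj_apply_of_isGraphMap hsum (fun _ => rfl) (isGraphMap_elim_toD2 E1 E2) hab
  funext a b
  apply propext
  rcases a with x | x <;> rcases b with y | y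
  · exact F.obj_apply_iff_of_retraction h1 hsum (isGraphMap_inl E1 E2)
      (isGraphMap_elim_id_const E1 E2 x) (fun _ => rfl) x y
  · exact iff_of_false (fun hxy => zero_ne_one (toD2 hxy)) id
  · exact iff_of_false (fun hxy => one_ne_zero (toD2 hxy)) id
  · exact F.obj_apply_iff_of_retraction h2 hsum (isGraphMap_inr E1 E2)
      (isGraphMap_elim_const_id E1 E2 x) (fun _ => rfl) x y
end

section
/- Let Ω1*, Ω2* be families of pointed graphs with pointed representable functors F1=F^{Ω1*} and F2=F^{Ω2*}. Then F1 ≤ F2 if and only if Ω1* ≼ Ω2*, i.e., for every (ω1,z1,ẑ1)∈Ω1* there exist (ω2,z2,ẑ2)∈Ω2* and a graph map p:(ω2,z2,ẑ2)→(ω1,z1,ẑ1) with p(z2)=z1 and p(ẑ2)=ẑ1. -/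
/-- The relation of a pointed representable functor F^{Ω*} on a graph (V,E). -/
def ptRel {ι : Type} (Vω : ι → Type) (Eω : ∀ i, Vω i → Vω i → Prop)
    (z zz : ∀ i, Vω i) {V : Type} (E : V → V → Prop) : V → V → Prop := fun v v' =>
  ∃ (i : ι) (φ : Vω i → V), IsGraphMap (Eω i) E φ ∧ φ (z i) = v ∧ φ (zz i) = v'

theorem IsGraphMap.id {V : Type} (E : V → V → Prop) : IsGraphMap E E id :=
  fun _ _ h => Or.inl h

theorem IsGraphMap.comp {U V W : Type} {E : U → U → Prop} {E' : V → V → Prop}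
    {E'' : W → W → Prop} {ψ : V → W} {φ : U → V} (hψ : IsGraphMap E' E'' ψ)
    (hφ : IsGraphMap E E' φ) : IsGraphMap E E'' (ψ ∘ φ) := by
  intro x y hxy
  rcases hφ x y hxy with h | h
  · exact hψ _ _ h
  · exact Or.inr (congrArg ψ h)

theorem ptRel_self {ι : Type} (Vω : ι → Type) (Eω : ∀ i, Vω i → Vω i → Prop)
    (z zz : ∀ i, Vω i) (i : ι) : ptRel Vω Eω z zz (Eω i) (z i) (zz i) :=
  ⟨i, id, IsGraphMap.id _, rfl, rfl⟩

theorem ptRel_of_isGraphMap {ι : Type} {Vω : ι → Type} {Eω : ∀ i, Vω i → Vω i → Prop}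
    {z zz : ∀ i, Vω i} {V W : Type} {E : V → V → Prop} {E' : W → W → Prop} {φ : V → W}
    (hφ : IsGraphMap E E' φ) {v v' : V} (h : ptRel Vω Eω z zz E v v') :
    ptRel Vω Eω z zz E' (φ v) (φ v') := by
  obtain ⟨i, ψ, hψ, rfl, rfl⟩ := h
  exact ⟨i, φ ∘ ψ, hφ.comp hψ, rfl, rfl⟩

theorem pointed_le_iff_covering_general
    {ι₁ ι₂ : Type}
    (V₁ : ι₁ → Type) [∀ i, Finite (V₁ i)]
    (E₁ : ∀ i, V₁ i → V₁ i → Prop) (hE₁ : ∀ i, Reflexive (E₁ i))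
    (z₁ zz₁ : ∀ i, V₁ i)
    (V₂ : ι₂ → Type)
    (E₂ : ∀ j, V₂ j → V₂ j → Prop)
    (z₂ zz₂ : ∀ j, V₂ j) :
    (∀ (V : Type) [Finite V] (E : V → V → Prop), Reflexive E →
        ∀ v v', ptRel V₁ E₁ z₁ zz₁ E v v' → ptRel V₂ E₂ z₂ zz₂ E v v') ↔
    (∀ i : ι₁, ∃ (j : ι₂) (p : V₂ j → V₁ i),
        IsGraphMap (E₂ j) (E₁ i) p ∧ p (z₂ j) = z₁ i ∧ p (zz₂ j) = zz₁ i) := by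
  constructor
  · -- Evaluate the inclusion on the representing graph `ω₁` itself (Yoneda).
    intro h i
    exact h (V₁ i) (E₁ i) (hE₁ i) _ _ (ptRel_self V₁ E₁ z₁ zz₁ i)
  · rintro h V _ E - v v' ⟨i, φ, hφ, rfl, rfl⟩
    obtain ⟨j, p, hp, hz, hzz⟩ := h i
    rw [← hz, ← hzz]
    exact ptRel_of_isGraphMap hφ (ptRel_of_isGraphMap hp (ptRel_self V₂ E₂ z₂ zz₂ j))

/-- F^{Ω₁*} ≤ F^{Ω₂*} iff Ω₁* ≼ Ω₂* (covering of pointed families). -/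
theorem pointed_le_iff_covering
    {ι₁ ι₂ : Type}
    (V₁ : ι₁ → Type) [∀ i, Finite (V₁ i)]
    (E₁ : ∀ i, V₁ i → V₁ i → Prop) (hE₁ : ∀ i, Reflexive (E₁ i))
    (z₁ zz₁ : ∀ i, V₁ i)
    (V₂ : ι₂ → Type) [∀ j, Finite (V₂ j)]
    (E₂ : ∀ j, V₂ j → V₂ j → Prop) (hE₂ : ∀ j, Reflexive (E₂ j))
    (z₂ zz₂ : ∀ j, V₂ j) :
    (∀ (V : Type) [Finite V] (E : V → V → Prop), Reflexive E →
        ∀ v v', ptRel V₁ E₁ z₁ zz₁ E v v' → ptRel V₂ E₂ z₂ zz₂ E v v') ↔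
    (∀ i : ι₁, ∃ (j : ι₂) (p : V₂ j → V₁ i),
        IsGraphMap (E₂ j) (E₁ i) p ∧ p (z₂ j) = z₁ i ∧ p (zz₂ j) = zz₁ i) :=
  pointed_le_iff_covering_general V₁ E₁ hE₁ z₁ zz₁ V₂ E₂ z₂ zz₂
end

section
/- Let F be a vertex-preserving endofunctor from directed graphs to clustering graphs (symmetric and transitive graphs). Then F satisfies the axiom of value (F(L2)=D2 and F(K2)=K2) if and only if F satisfies the extended axiom of value (F(Tn)=Dn and F(Kn)=Kn for all n), where Tn is the transitive line graph on vertices a1,…,an with arrows ai→aj for i<j. -/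
/-- The transitive line graph Tn: arrows aᵢ → aⱼ for i ≤ j. -/
def TnRel (n : ℕ) : Fin n → Fin n → Prop := fun a b => a ≤ b

/-- The complete graph Kn. -/
def KnRel (n : ℕ) : Fin n → Fin n → Prop := fun _ _ => True

/-- The discrete graph Dn. -/
def DnRel (n : ℕ) : Fin n → Fin n → Prop := fun a b => a = b

lemma isGraphMap_to_complete {V W : Type} (E : V → V → Prop) (φ : V → W) :
    IsGraphMap E (fun _ _ => True) φ :=
  fun _ _ _ => Or.inl trivial

lemma isGraphMap_threshold {V : Type} [LinearOrder V] (c : V) :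
    IsGraphMap (· ≤ ·) L2rel (fun i => if i ≤ c then (0 : Fin 2) else 1) := by
  intro i j hij
  by_cases hj : j ≤ c
  · simp [hj, hij.trans hj]
  · by_cases hi : i ≤ c <;> simp [hi, hj, L2rel]

lemma L2rel_eq_TnRel_two : L2rel = TnRel 2 := by
  ext a b
  fin_cases a <;> fin_cases b <;> simp [L2rel, TnRel]

namespace GraphFunctor

variable (F : GraphFunctor)

lemma eq_of_obj_of_isGraphMap_L2 (hL2 : F.obj (Fin 2) L2rel = D2rel) {V : Type} [Finite V]
    {E : V → V → Prop} (hE : Reflexive E) {φ : V → Fin 2} (hφ : IsGraphMap E L2rel φ)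
    {x y : V} (hxy : F.obj V E x y) : φ x = φ y := by
  have h := F.map V (Fin 2) E L2rel φ hE (fun a => Or.inl rfl) hφ x y hxy
  rw [hL2] at h
  exact h.elim id id

theorem obj_le_eq_eq (hL2 : F.obj (Fin 2) L2rel = D2rel) (V : Type) [Finite V] [LinearOrder V] :
    F.obj V (· ≤ ·) = (· = ·) := by
  ext x y
  refine ⟨fun hxy => ?_, fun h => h ▸ F.refl V _ le_refl x⟩
  by_contra hne
  have hsep := F.eq_of_obj_of_isGraphMap_L2 hL2 le_refl (isGraphMap_threshold (min x y)) hxy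
  rcases lt_or_gt_of_ne hne with h | h <;> simp [h.le, h.not_ge] at hsep

theorem obj_complete (hK2 : F.obj (Fin 2) K2rel = K2rel) (V : Type) [Finite V] :
    F.obj V (fun _ _ => True) = fun _ _ => True := by
  ext x y
  refine ⟨fun _ => trivial, fun _ => ?_⟩
  have h01 : F.obj (Fin 2) K2rel 0 1 := by rw [hK2]; trivial
  rcases F.map (Fin 2) V K2rel _ ![x, y] (fun _ => trivial) (fun _ => trivial)
      (isGraphMap_to_complete _ _) 0 1 h01 with h | h
  · exact h
  · simpa [show x = y from h] using F.refl V _ (fun _ => trivial) y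

end GraphFunctor

theorem axiom_of_value_iff_extended_general (F : GraphFunctor) :
    (F.obj (Fin 2) L2rel = D2rel ∧ F.obj (Fin 2) K2rel = K2rel) ↔
    (∀ n : ℕ, F.obj (Fin n) (TnRel n) = DnRel n ∧ F.obj (Fin n) (KnRel n) = KnRel n) := by
  constructor
  · rintro ⟨hL2, hK2⟩ n
    exact ⟨F.obj_le_eq_eq hL2 (Fin n), F.obj_complete hK2 (Fin n)⟩
  · intro h
    exact ⟨L2rel_eq_TnRel_two ▸ (h 2).1, (h 2).2⟩

/-- for a clustering-valued endofunctor F, the axiom of value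
(F(L2)=D2 and F(K2)=K2) is equivalent to the extended axiom of value
(F(Tn)=Dn and F(Kn)=Kn for all n). -/
theorem axiom_of_value_iff_extended (F : GraphFunctor)
    (hclust : ∀ (V : Type) [Finite V] (E : V → V → Prop), Reflexive E →
        Symmetric (F.obj V E) ∧ Transitive (F.obj V E)) :
    (F.obj (Fin 2) L2rel = D2rel ∧ F.obj (Fin 2) K2rel = K2rel) ↔
    (∀ n : ℕ, F.obj (Fin n) (TnRel n) = DnRel n ∧ F.obj (Fin n) (KnRel n) = KnRel n) :=
  axiom_of_value_iff_extended_general F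
end
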